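/- Let μ = (q, s) be an IC mechanism for k goods and λ > 1. For random valuations X and Y defined on the same probability space with E[‖X − Y‖₁] < ∞ and with s(X), s(λY) integrable, we have E[s(X)] ≤ E[s(λY)] + (λ/(λ−1))·E[‖X − Y‖₁]. -/
import Mathlib


open MeasureTheory

/-- Scalar product on `ℝ^k`. -/
def dot {k : ℕ} (a b : Fin k → ℝ) : ℝ := ∑ i, a i * b i

/-- ℓ₁-norm on `ℝ^k`. -/
def l1 {k : ℕ} (z : Fin k → ℝ) : ℝ := ∑ i, |z i|

/-- The allocation takes values in `[0,1]^k` (on the nonnegative orthant). -/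
def InBox {k : ℕ} (q : (Fin k → ℝ) → (Fin k → ℝ)) : Prop :=
  ∀ x : Fin k → ℝ, 0 ≤ x → ∀ i, 0 ≤ q x i ∧ q x i ≤ 1

/-- Incentive compatibility on the nonnegative orthant. -/
def IC {k : ℕ} (q : (Fin k → ℝ) → (Fin k → ℝ)) (s : (Fin k → ℝ) → ℝ) : Prop :=
  ∀ x y : Fin k → ℝ, 0 ≤ x → 0 ≤ y →
    dot (q x) x - s x ≥ dot (q y) x - s y

lemma pointwise_bound {k : ℕ} (q : (Fin k → ℝ) → (Fin k → ℝ)) (s : (Fin k → ℝ) → ℝ)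
    (hq : InBox q) (hIC : IC q s) (x y : Fin k → ℝ) (hx : 0 ≤ x) (hy : 0 ≤ y)
    (lam : ℝ) (hlam : 1 < lam) :
    s x ≤ s (lam • y) + (lam / (lam - 1)) * l1 (x - y) := by
  have hlam0 : 0 < lam := lt_trans one_pos hlam
  have hly : (0 : Fin k → ℝ) ≤ lam • y := fun i => by
    have := hy i
    simpa using mul_nonneg hlam0.le this
  set a : Fin k → ℝ := fun i => q x i - q (lam • y) i with ha
  have h1 := hIC x (lam • y) hx hly
  have h2 := hIC (lam • y) x hly hx
  simp only [dot, Pi.smul_apply, smul_eq_mul] at h1 h2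
  have hmul : ∀ (b : Fin k → ℝ), ∑ i, b i * (lam * y i) = lam * ∑ i, b i * y i := by
    intro b; rw [Finset.mul_sum]; apply Finset.sum_congr rfl; intros; ring
  -- Δ ≤ ∑ a i * x i
  have hA : s x - s (lam • y) ≤ ∑ i, a i * x i := by
    have : ∑ i, a i * x i = (∑ i, q x i * x i) - ∑ i, q (lam • y) i * x i := by
      simp only [ha, sub_mul, Finset.sum_sub_distrib]
    rw [this]; linarith
  -- lam * ∑ a i * y i ≤ Δ
  have hB : lam * ∑ i, a i * y i ≤ s x - s (lam • y) := by
    rw [hmul (q x), hmul (q (lam • y))] at h2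
    have : lam * ∑ i, a i * y i = lam * (∑ i, q x i * y i) - lam * ∑ i, q (lam • y) i * y i := by
      simp only [ha, sub_mul, Finset.sum_sub_distrib, mul_sub]
    rw [this]; linarith
  -- ∑ a i * (x i - y i) ≤ l1 (x - y)
  have hC : ∑ i, a i * (x i - y i) ≤ l1 (x - y) := by
    unfold l1
    apply Finset.sum_le_sum
    intro i _
    have hqx := hq x hx i
    have hqy := hq (lam • y) hly i
    have hai : |a i| ≤ 1 := by
      rw [abs_le]; constructor <;> simp only [ha] <;> nlinarith [hqx.1, hqx.2, hqy.1, hqy.2]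
    calc a i * (x i - y i) ≤ |a i * (x i - y i)| := le_abs_self _
      _ = |a i| * |x i - y i| := abs_mul _ _
      _ ≤ 1 * |x i - y i| := by
          apply mul_le_mul_of_nonneg_right hai (abs_nonneg _)
      _ = |(x - y) i| := by simp [Pi.sub_apply]
  have hsplit : ∑ i, a i * x i = (∑ i, a i * (x i - y i)) + ∑ i, a i * y i := by
    rw [← Finset.sum_add_distrib]; apply Finset.sum_congr rfl; intro i _; ring
  set Δ := s x - s (lam • y) with hΔ
  set L := l1 (x - y) with hL
  have key : Δ ≤ L + Δ / lam := by
    have hy' : ∑ i, a i * y i ≤ Δ / lam := by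
      rw [le_div_iff₀ hlam0]; linarith
    calc Δ ≤ ∑ i, a i * x i := hA
      _ = (∑ i, a i * (x i - y i)) + ∑ i, a i * y i := hsplit
      _ ≤ L + Δ / lam := add_le_add hC hy'
  have hlam1 : 0 < lam - 1 := by linarith
  have h3 : (Δ - L) * lam ≤ Δ := (le_div_iff₀ hlam0).mp (by linarith)
  have this2 : (lam - 1) * Δ ≤ lam * L := by nlinarith [h3]
  have hfin : Δ ≤ lam / (lam - 1) * L := by
    rw [div_mul_eq_mul_div, le_div_iff₀ hlam1]; linarith
  linarith
set_option maxHeartbeats 400000 in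
/-- `E[s(X)] ≤ E[s(λY)] + (λ/(λ−1))·E[‖X − Y‖₁]` for coupled valuations. -/
theorem expected_payment_bound {k : ℕ}
    {Ω : Type*} [MeasurableSpace Ω] (P : Measure Ω) [IsProbabilityMeasure P]
    (q : (Fin k → ℝ) → (Fin k → ℝ)) (s : (Fin k → ℝ) → ℝ)
    (hq : InBox q) (hIC : IC q s)
    (X Y : Ω → Fin k → ℝ) (hX : ∀ ω, 0 ≤ X ω) (hY : ∀ ω, 0 ≤ Y ω)
    (lam : ℝ) (hlam : 1 < lam)
    (hW : Integrable (fun ω => l1 (X ω - Y ω)) P)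
    (hsX : Integrable (fun ω => s (X ω)) P)
    (hsY : Integrable (fun ω => s (lam • Y ω)) P) :
    ∫ ω, s (X ω) ∂P ≤
      (∫ ω, s (lam • Y ω) ∂P) + (lam / (lam - 1)) * ∫ ω, l1 (X ω - Y ω) ∂P := by
  have hmono : ∫ ω, s (X ω) ∂P ≤
      ∫ ω, (s (lam • Y ω) + (lam / (lam - 1)) * l1 (X ω - Y ω)) ∂P := by
    apply integral_mono hsX (hsY.add (hW.const_mul _))
    intro ω
    exact pointwise_bound q s hq hIC (X ω) (Y ω) (hX ω) (hY ω) lam hlam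
  rw [integral_add hsY (hW.const_mul _), integral_const_mul] at hmono
  exact hmono
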